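/- Discrete likelihood ratio implies stochastic order for the mixture densities: let N_1, N_2 take values in ℕ_{≥1} and suppose that k ↦ Pr[N_2=k]/Pr[N_1=k] is nondecreasing on the common support (likelihood ratio order N_1 ≤_{lr} N_2). Then the functions ψ_j(s) = Σ_{k=2}^∞ (k-1)(1-s)^{k-2} Pr[N_j=k] (the negatives of the derivatives of the nabla Laplace transforms), j = 1,2, satisfy: s ↦ ψ_2(s)/ψ_1(s) is nonincreasing on (0,1). -/
import Mathlib

/-- The k-th term of ψ. -/
private def psiTerm (P : ℕ → ℝ) (u : ℝ) (k : ℕ) : ℝ := ((k : ℝ) - 1) * u ^ (k - 2) * P k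

private lemma psiTerm_nonneg {P : ℕ → ℝ} (hP0 : P 0 = 0) (hnn : ∀ k, 0 ≤ P k)
    {u : ℝ} (hu : 0 ≤ u) (k : ℕ) : 0 ≤ psiTerm P u k := by
  match k with
  | 0 => simp [psiTerm, hP0]
  | (k+1) =>
    have h1 : (0:ℝ) ≤ ((k+1 : ℕ) : ℝ) - 1 := by push_cast; linarith [Nat.cast_nonneg (α := ℝ) k]
    exact mul_nonneg (mul_nonneg h1 (pow_nonneg hu _)) (hnn _)

private lemma psiTerm_summable {P : ℕ → ℝ} (hP0 : P 0 = 0) (hnn : ∀ k, 0 ≤ P k)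
    (hmean : Summable (fun k : ℕ => ((k : ℝ) - 1) * P k))
    {u : ℝ} (hu : 0 ≤ u) (hu1 : u ≤ 1) : Summable (psiTerm P u) := by
  apply Summable.of_nonneg_of_le (psiTerm_nonneg hP0 hnn hu) ?_ hmean
  intro k
  match k with
  | 0 => simp [psiTerm, hP0]
  | (k+1) =>
    have h1 : (0:ℝ) ≤ ((k+1 : ℕ) : ℝ) - 1 := by push_cast; linarith [Nat.cast_nonneg (α := ℝ) k]
    have h2 : u ^ (k + 1 - 2) ≤ 1 := pow_le_one₀ hu hu1
    have := mul_le_of_le_one_right h1 h2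
    exact mul_le_mul_of_nonneg_right this (hnn _)

private lemma psi_pos {P : ℕ → ℝ} (hP0 : P 0 = 0) (hnn : ∀ k, 0 ≤ P k)
    (h2 : ∃ k, 2 ≤ k ∧ 0 < P k)
    (hmean : Summable (fun k : ℕ => ((k : ℝ) - 1) * P k))
    {u : ℝ} (hu : 0 < u) (hu1 : u ≤ 1) : 0 < ∑' k, psiTerm P u k := by
  obtain ⟨k, hk2, hkP⟩ := h2
  have hsum := psiTerm_summable hP0 hnn hmean hu.le hu1
  have hk : 0 < psiTerm P u k := by
    have h1 : (0:ℝ) < ((k : ℕ) : ℝ) - 1 := by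
      have : (2:ℝ) ≤ (k : ℝ) := by exact_mod_cast hk2
      linarith
    exact mul_pos (mul_pos h1 (pow_pos hu _)) hkP
  exact lt_of_lt_of_le hk (Summable.le_tsum hsum k fun j _ => psiTerm_nonneg hP0 hnn hu.le j)

/-- The key pairwise inequality (WLOG `m ≤ n`). -/
private lemma pair_ineq {P₁ P₂ : ℕ → ℝ} (hP₁0 : P₁ 0 = 0) (hP₂0 : P₂ 0 = 0)
    (hP₁nn : ∀ k, 0 ≤ P₁ k) (hP₂nn : ∀ k, 0 ≤ P₂ k)
    (hlr : ∀ j k : ℕ, j ≤ k → P₂ j * P₁ k ≤ P₂ k * P₁ j)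
    {x y : ℝ} (hy : 0 ≤ y) (hyx : y ≤ x) {m n : ℕ} (hmn : m ≤ n) :
    psiTerm P₂ y m * psiTerm P₁ x n + psiTerm P₂ y n * psiTerm P₁ x m
      ≤ psiTerm P₂ x m * psiTerm P₁ y n + psiTerm P₂ x n * psiTerm P₁ y m := by
  have hx : 0 ≤ x := le_trans hy hyx
  match m with
  | 0 => simp [psiTerm, hP₁0, hP₂0]
  | 1 => simp [psiTerm]
  | (m+2) =>
    obtain ⟨c, rfl⟩ := Nat.exists_eq_add_of_le hmn
    have e1 : m + 2 - 2 = m := by omega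
    have e2 : m + 2 + c - 2 = m + c := by omega
    simp only [psiTerm, e1, e2]
    have c1 : (0:ℝ) ≤ ((m+2 : ℕ) : ℝ) - 1 := by push_cast; linarith [Nat.cast_nonneg (α := ℝ) m]
    have c2 : (0:ℝ) ≤ ((m+2+c : ℕ) : ℝ) - 1 := by
      push_cast; linarith [Nat.cast_nonneg (α := ℝ) m, Nat.cast_nonneg (α := ℝ) c]
    have hlr' : 0 ≤ P₂ (m+2+c) * P₁ (m+2) - P₂ (m+2) * P₁ (m+2+c) :=
      sub_nonneg.2 (hlr (m+2) (m+2+c) (by omega))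
    have hpow : y ^ c ≤ x ^ c := pow_le_pow_left₀ hy hyx c
    have key : 0 ≤ x ^ (m+c) * y ^ m - x ^ m * y ^ (m+c) := by
      rw [pow_add, pow_add]
      nlinarith [mul_le_mul_of_nonneg_left hpow
        (mul_nonneg (pow_nonneg hx m) (pow_nonneg hy m))]
    nlinarith [mul_nonneg (mul_nonneg (mul_nonneg c1 c2) hlr') key]

set_option maxHeartbeats 1000000 in
/-- The cross-product inequality ψ₂(y-side)·ψ₁(x-side) ≤ ψ₂(x-side)·ψ₁(y-side). -/
private lemma cross_ineq {P₁ P₂ : ℕ → ℝ} (hP₁0 : P₁ 0 = 0) (hP₂0 : P₂ 0 = 0)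
    (hP₁nn : ∀ k, 0 ≤ P₁ k) (hP₂nn : ∀ k, 0 ≤ P₂ k)
    (hlr : ∀ j k : ℕ, j ≤ k → P₂ j * P₁ k ≤ P₂ k * P₁ j)
    (hmean₁ : Summable (fun k : ℕ => ((k : ℝ) - 1) * P₁ k))
    (hmean₂ : Summable (fun k : ℕ => ((k : ℝ) - 1) * P₂ k))
    {x y : ℝ} (hy : 0 ≤ y) (hyx : y ≤ x) (hx1 : x ≤ 1) :
    (∑' k, psiTerm P₂ y k) * (∑' k, psiTerm P₁ x k)
      ≤ (∑' k, psiTerm P₂ x k) * (∑' k, psiTerm P₁ y k) := by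
  have hx : 0 ≤ x := le_trans hy hyx
  have hy1 : y ≤ 1 := le_trans hyx hx1
  have S2y := psiTerm_summable hP₂0 hP₂nn hmean₂ hy hy1
  have S2x := psiTerm_summable hP₂0 hP₂nn hmean₂ hx hx1
  have S1y := psiTerm_summable hP₁0 hP₁nn hmean₁ hy hy1
  have S1x := psiTerm_summable hP₁0 hP₁nn hmean₁ hx hx1
  set A : ℕ × ℕ → ℝ := fun p => psiTerm P₂ y p.1 * psiTerm P₁ x p.2 with hA_def
  set B : ℕ × ℕ → ℝ := fun p => psiTerm P₂ x p.1 * psiTerm P₁ y p.2 with hB_def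
  have hA : Summable A := S2y.mul_of_nonneg S1x
    (fun k => psiTerm_nonneg hP₂0 hP₂nn hy k) (fun k => psiTerm_nonneg hP₁0 hP₁nn hx k)
  have hB : Summable B := S2x.mul_of_nonneg S1y
    (fun k => psiTerm_nonneg hP₂0 hP₂nn hx k) (fun k => psiTerm_nonneg hP₁0 hP₁nn hy k)
  have hAs : Summable (fun p : ℕ × ℕ => A (p.2, p.1)) :=
    (Equiv.prodComm ℕ ℕ).summable_iff.2 hA
  have hBs : Summable (fun p : ℕ × ℕ => B (p.2, p.1)) :=
    (Equiv.prodComm ℕ ℕ).summable_iff.2 hB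
  have hAeq : ∑' p : ℕ × ℕ, A (p.2, p.1) = ∑' p, A p := (Equiv.prodComm ℕ ℕ).tsum_eq A
  have hBeq : ∑' p : ℕ × ℕ, B (p.2, p.1) = ∑' p, B p := (Equiv.prodComm ℕ ℕ).tsum_eq B
  rw [Summable.tsum_mul_tsum S2y S1x hA, Summable.tsum_mul_tsum S2x S1y hB]
  have hpt : ∀ p : ℕ × ℕ, A p + A (p.2, p.1) ≤ B p + B (p.2, p.1) := by
    rintro ⟨m, n⟩
    simp only [hA_def, hB_def]
    rcases le_total m n with h | h
    · exact pair_ineq hP₁0 hP₂0 hP₁nn hP₂nn hlr hy hyx h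
    · have := pair_ineq hP₁0 hP₂0 hP₁nn hP₂nn hlr hy hyx h
      linarith
  have hsum_le : ∑' p : ℕ × ℕ, (A p + A (p.2, p.1)) ≤ ∑' p : ℕ × ℕ, (B p + B (p.2, p.1)) :=
    Summable.tsum_le_tsum hpt (hA.add hAs) (hB.add hBs)
  rw [Summable.tsum_add hA hAs, Summable.tsum_add hB hBs, hAeq, hBeq] at hsum_le
  linarith

/-- the likelihood ratio order N₁ ≤_lr N₂ implies that the ratio
of the negated derivatives of the nabla Laplace transforms,
ψ₂(s)/ψ₁(s) with ψⱼ(s) = Σ_{k≥2} (k-1)(1-s)^{k-2} Pr[Nⱼ=k],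
is nonincreasing on (0,1) (i.e. N₁ ≤_{d-Lt-r} N₂). -/
theorem stmt_15 (P₁ P₂ : ℕ → ℝ) (hP₁0 : P₁ 0 = 0) (hP₂0 : P₂ 0 = 0)
    (hP₁nn : ∀ k, 0 ≤ P₁ k) (hP₂nn : ∀ k, 0 ≤ P₂ k)
    (hP₁sum : ∑' k : ℕ, P₁ k = 1) (hP₂sum : ∑' k : ℕ, P₂ k = 1)
    (hlr : ∀ j k : ℕ, j ≤ k → P₂ j * P₁ k ≤ P₂ k * P₁ j)
    (hP₁2 : ∃ k, 2 ≤ k ∧ 0 < P₁ k) (hP₂2 : ∃ k, 2 ≤ k ∧ 0 < P₂ k)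
    (hmean₁ : Summable (fun k : ℕ => ((k : ℝ) - 1) * P₁ k))
    (hmean₂ : Summable (fun k : ℕ => ((k : ℝ) - 1) * P₂ k)) :
    AntitoneOn (fun s : ℝ =>
        (∑' k : ℕ, ((k : ℝ) - 1) * (1 - s) ^ (k - 2) * P₂ k)
          / (∑' k : ℕ, ((k : ℝ) - 1) * (1 - s) ^ (k - 2) * P₁ k))
      (Set.Ioo 0 1) := by
  intro s hs t ht hst
  obtain ⟨hs0, hs1⟩ := hs
  obtain ⟨ht0, ht1⟩ := ht
  have hx1 : (0:ℝ) < 1 - s := by linarith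
  have hy1 : (0:ℝ) < 1 - t := by linarith
  have hxle : (1:ℝ) - s ≤ 1 := by linarith
  have hyx : 1 - t ≤ 1 - s := by linarith
  have hpos1s : 0 < ∑' k, psiTerm P₁ (1 - s) k :=
    psi_pos hP₁0 hP₁nn hP₁2 hmean₁ hx1 hxle
  have hpos1t : 0 < ∑' k, psiTerm P₁ (1 - t) k :=
    psi_pos hP₁0 hP₁nn hP₁2 hmean₁ hy1 (by linarith)
  show (∑' k, psiTerm P₂ (1 - t) k) / (∑' k, psiTerm P₁ (1 - t) k)
      ≤ (∑' k, psiTerm P₂ (1 - s) k) / (∑' k, psiTerm P₁ (1 - s) k)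
  rw [div_le_div_iff₀ hpos1t hpos1s]
  exact cross_ineq hP₁0 hP₂0 hP₁nn hP₂nn hlr hmean₁ hmean₂ hy1.le hyx hxle
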